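/- In the framed sphere braid Lie algebra 𝔣𝔅₅, the element Φ(X₅₂, X₂₃ + X₂₄) equals Φ(X₅₂, X₁₅) for any formal group-like power series Φ in two variables; more precisely, X₂₃ + X₂₄ = −X₂₁ − X₂₅ − X₂₂ and the elements X₅₂ and X₁₅ commute with X₂₂ and with X₅₁ + X₅₂ + X₁₂, so that substituting commuting central corrections does not change the value of Φ. -/

import Mathlib

open FreeLieAlgebra

/-- Defining relations of the framed Drinfeld–Kohno Lie algebra 𝔣𝔱ₙ (generators out of
the range `1 ≤ i, j ≤ n` are set to zero). -/
def ftRels (k : Type) [Field k] (n : ℕ) : Set (FreeLieAlgebra k (ℕ × ℕ)) :=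
  { x | (∃ i j : ℕ, x = of k (i, j) - of k (j, i)) ∨
        (∃ i j : ℕ, ¬(1 ≤ i ∧ i ≤ n ∧ 1 ≤ j ∧ j ≤ n) ∧ x = of k (i, j)) ∨
        (∃ i j l m : ℕ, i ≠ l ∧ i ≠ m ∧ j ≠ l ∧ j ≠ m ∧ x = ⁅of k (i, j), of k (l, m)⁆) ∨
        (∃ i j l : ℕ, i ≠ j ∧ j ≠ l ∧ i ≠ l ∧ x = ⁅of k (i, j), of k (l, i) + of k (l, j)⁆) ∨
        (∃ i j l : ℕ, x = ⁅of k (i, i), of k (j, l)⁆) }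

/-- Defining relations of the framed sphere braid Lie algebra 𝔣𝔅ₘ: those of 𝔣𝔱ₘ
together with the residue relations `Σ_{j=1}^m X_{ij} = 0` for each `1 ≤ i ≤ m`. -/
def fBRels (k : Type) [Field k] (m : ℕ) : Set (FreeLieAlgebra k (ℕ × ℕ)) :=
  ftRels k m ∪ { x | ∃ i : ℕ, 1 ≤ i ∧ i ≤ m ∧ x = ∑ j ∈ Finset.Icc 1 m, of k (i, j) }

noncomputable def fBIdeal (k : Type) [Field k] (m : ℕ) : LieIdeal k (FreeLieAlgebra k (ℕ × ℕ)) :=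
  LieSubmodule.lieSpan k _ (fBRels k m)

/-- The framed sphere braid Lie algebra 𝔣𝔅ₘ. -/
abbrev fB (k : Type) [Field k] (m : ℕ) := FreeLieAlgebra k (ℕ × ℕ) ⧸ fBIdeal k m

/-- The completed enveloping algebra placeholder: the universal enveloping algebra of 𝔣𝔅₅. -/
abbrev UfB (k : Type) [Field k] := UniversalEnvelopingAlgebra k (fB k 5)

/-- The image `X i j` of the generator `X_{ij}` of 𝔣𝔅₅ in its enveloping algebra. -/
noncomputable def X (k : Type) [Field k] (i j : ℕ) : UfB k :=
  UniversalEnvelopingAlgebra.ι k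
    (LieSubmodule.Quotient.mk' (fBIdeal k 5) (of k (i, j)))

section helpers
variable (k : Type) [Field k]

lemma Xrel0 (x : FreeLieAlgebra k (ℕ × ℕ)) (hx : x ∈ fBRels k 5) :
    UniversalEnvelopingAlgebra.ι k (LieSubmodule.Quotient.mk' (fBIdeal k 5) x) = 0 := by
  have hmem : x ∈ fBIdeal k 5 := LieSubmodule.subset_lieSpan hx
  rw [(LieSubmodule.Quotient.mk_eq_zero _).mpr hmem, map_zero]

lemma Xsym (i j : ℕ) : X k i j = X k j i := by
  have h := Xrel0 k (of k (i, j) - of k (j, i)) (Or.inl (Or.inl ⟨i, j, rfl⟩))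
  rw [map_sub, map_sub, sub_eq_zero] at h
  exact h

lemma Xcen (i j l : ℕ) : Commute (X k i i) (X k j l) := by
  have h := Xrel0 k ⁅of k (i, i), of k (j, l)⁆
    (Or.inl (Or.inr (Or.inr (Or.inr (Or.inr ⟨i, j, l, rfl⟩)))))
  simp only [LieSubmodule.Quotient.mk'_apply, LieSubmodule.Quotient.mk_bracket,
    LieHom.map_lie, Ring.lie_def, sub_eq_zero] at h
  simpa only [X, LieSubmodule.Quotient.mk'_apply, Commute, SemiconjBy] using h

lemma Xbraid (i j l : ℕ) (h1 : i ≠ j) (h2 : j ≠ l) (h3 : i ≠ l) :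
    Commute (X k i j) (X k l i + X k l j) := by
  have h := Xrel0 k ⁅of k (i, j), of k (l, i) + of k (l, j)⁆
    (Or.inl (Or.inr (Or.inr (Or.inr (Or.inl ⟨i, j, l, h1, h2, h3, rfl⟩)))))
  simp only [LieSubmodule.Quotient.mk'_apply, LieSubmodule.Quotient.mk_bracket,
    Submodule.Quotient.mk_add, LieHom.map_lie, map_add, Ring.lie_def] at h
  exact sub_eq_zero.mp h

lemma Xsum : X k 2 1 + X k 2 2 + X k 2 3 + X k 2 4 + X k 2 5 = 0 := by
  have h := Xrel0 k (∑ j ∈ Finset.Icc 1 5, of k (2, j))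
    (Or.inr ⟨2, by norm_num, by norm_num, rfl⟩)
  rw [show (Finset.Icc 1 5 : Finset ℕ) = {1, 2, 3, 4, 5} from rfl] at h
  rw [Finset.sum_insert (by decide), Finset.sum_insert (by decide),
    Finset.sum_insert (by decide), Finset.sum_insert (by decide),
    Finset.sum_singleton] at h
  simp only [map_add] at h
  simpa only [X, ← add_assoc] using h

end helpers

/-- In 𝔣𝔅₅, `X₂₃ + X₂₄ = −X₂₁ − X₂₅ − X₂₂`, the elements `X₅₂` and `X₁₅` commute with
`X₂₂` and with `X₅₁ + X₅₂ + X₁₂`, and consequently for any two-variable evaluation `Φ`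
which is unchanged by adding commuting (central) corrections to its arguments, one has
`Φ(X₅₂, X₂₃ + X₂₄) = Φ(X₅₂, X₁₅)`. -/
theorem sphereBraid5_Phi_X52_arg
    (k : Type) [Field k] [CharZero k]
    (Φ : UfB k → UfB k → UfB k)
    (hΦl : ∀ a b z : UfB k, Commute z a → Commute z b → Φ (a + z) b = Φ a b)
    (hΦr : ∀ a b z : UfB k, Commute z a → Commute z b → Φ a (b + z) = Φ a b) :
    X k 2 3 + X k 2 4 = -X k 2 1 - X k 2 5 - X k 2 2 ∧
    Commute (X k 2 2) (X k 5 2) ∧ Commute (X k 2 2) (X k 1 5) ∧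
    Commute (X k 5 1 + X k 5 2 + X k 1 2) (X k 5 2) ∧
    Commute (X k 5 1 + X k 5 2 + X k 1 2) (X k 1 5) ∧
    Φ (X k 5 2) (X k 2 3 + X k 2 4) = Φ (X k 5 2) (X k 1 5) := by
  have hsum := Xsum k
  have h1 : X k 2 3 + X k 2 4 = -X k 2 1 - X k 2 5 - X k 2 2 := by
    rw [← sub_eq_zero]
    have e : X k 2 3 + X k 2 4 - (-X k 2 1 - X k 2 5 - X k 2 2) =
        X k 2 1 + X k 2 2 + X k 2 3 + X k 2 4 + X k 2 5 := by abel
    rw [e, hsum]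
  have hc1 : Commute (X k 2 2) (X k 5 2) := Xcen k 2 5 2
  have hc2 : Commute (X k 2 2) (X k 1 5) := Xcen k 2 1 5
  have hb52 : Commute (X k 5 2) (X k 1 5 + X k 1 2) :=
    Xbraid k 5 2 1 (by decide) (by decide) (by decide)
  have hb15 : Commute (X k 1 5) (X k 2 1 + X k 2 5) :=
    Xbraid k 1 5 2 (by decide) (by decide) (by decide)
  rw [Xsym k 2 1, Xsym k 2 5] at hb15
  have hc4 : Commute (X k 5 1 + X k 5 2 + X k 1 2) (X k 5 2) := by
    rw [Xsym k 5 1,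
      show X k 1 5 + X k 5 2 + X k 1 2 = (X k 1 5 + X k 1 2) + X k 5 2 from by abel]
    exact hb52.symm.add_left (Commute.refl _)
  have hc5 : Commute (X k 5 1 + X k 5 2 + X k 1 2) (X k 1 5) := by
    rw [Xsym k 5 1,
      show X k 1 5 + X k 5 2 + X k 1 2 = (X k 1 2 + X k 5 2) + X k 1 5 from by abel]
    exact hb15.symm.add_left (Commute.refl _)
  refine ⟨h1, hc1, hc2, hc4, hc5, ?_⟩
  set w : UfB k := X k 1 5 + X k 1 2 + X k 5 2 + X k 2 2 with hw
  have hcw52 : Commute w (X k 5 2) :=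
    ((hb52.symm.add_left (Commute.refl _)).add_left hc1)
  have hcw15 : Commute w (X k 1 5) := by
    rw [show w = (X k 1 2 + X k 5 2) + X k 1 5 + X k 2 2 from by rw [hw]; abel]
    exact (hb15.symm.add_left (Commute.refl _)).add_left hc2
  have hsum' := hsum
  rw [Xsym k 2 1, Xsym k 2 5] at hsum'
  have key : X k 2 3 + X k 2 4 = X k 1 5 + -w := by
    rw [hw, ← sub_eq_zero]
    have e : X k 2 3 + X k 2 4 -
        (X k 1 5 + -(X k 1 5 + X k 1 2 + X k 5 2 + X k 2 2)) =
        X k 1 2 + X k 2 2 + X k 2 3 + X k 2 4 + X k 5 2 := by abel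
    rw [e, hsum']
  rw [key]
  exact hΦr _ _ _ hcw52.neg_left hcw15.neg_left
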